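/- arXiv:1110.3419 — 2 statements merged into one kernel-verified Lean document; each statement's English description precedes it below -/
import Mathlib

section
/- For a,b ∈ ℝ with ab < 1 and ab ≠ 0, the measure ν(dx) = (2(1-ab)/π)·√(1-x²)/((1+a²-2ax)(1+b²-2bx)) dx on (-1,1), plus the atom ((a²-1)/(a²-ab))δ_{(a+1/a)/2} if |a|>1 and the atom ((b²-1)/(b²-ab))δ_{(b+1/b)/2} if |b|>1, is a probability measure. -/
/-!
Write `1 + c² - 2cx = 2c (p - x)` with `p = (c + c⁻¹)/2`, so `|p| ≥ 1`. Explicit antiderivatives,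
built from `arcsin x`, `√(1 - x²)` and `arcsin ((p x - 1)/(p - x))`, give
`∫_{-1}^{1} √(1 - x²)/(1 + c² - 2cx) dx = π / (2 max 1 c²)`.
Partial fractions in `x` turn the mass of the absolutely continuous part into a difference
quotient of `c ↦ c / max 1 c²`. When `|c| > 1`, this quotient falls short of `1` by exactly the
mass of the atom at `(c + c⁻¹)/2`. The diagonal `a = b` forces `|a| < 1` and uses the
corresponding double-pole integral instead.
-/

open MeasureTheory Set

/-- The two-parameter Askey–Wilson measure with parameters `a, b`. -/
noncomputable def askeyWilson (a b : ℝ) : Measure ℝ :=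
  volume.withDensity (fun x =>
    ENNReal.ofReal (indicator (Ioo (-1 : ℝ) 1)
      (fun x => 2 * (1 - a * b) / Real.pi * Real.sqrt (1 - x ^ 2) /
        ((1 + a ^ 2 - 2 * a * x) * (1 + b ^ 2 - 2 * b * x))) x)) +
  (if 1 < |a| then ENNReal.ofReal ((a ^ 2 - 1) / (a ^ 2 - a * b)) else 0) •
    Measure.dirac ((a + 1 / a) / 2) +
  (if 1 < |b| then ENNReal.ofReal ((b ^ 2 - 1) / (b ^ 2 - a * b)) else 0) •
    Measure.dirac ((b + 1 / b) / 2)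

open Real intervalIntegral

theorem intervalIntegrable_and_integral_eq_sub_of_hasDerivAt_of_nonneg {f f' : ℝ → ℝ} {a b : ℝ}
    (hab : a ≤ b) (hcont : ContinuousOn f (Icc a b))
    (hderiv : ∀ x ∈ Ioo a b, HasDerivAt f (f' x) x) (hpos : ∀ x ∈ Ioo a b, 0 ≤ f' x) :
    IntervalIntegrable f' volume a b ∧ ∫ x in a..b, f' x = f b - f a := by
  have hint : IntervalIntegrable f' volume a b :=
    (intervalIntegrable_iff_integrableOn_Ioc_of_le hab).2
      (integrableOn_deriv_of_nonneg hcont hderiv hpos)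
  exact ⟨hint, integral_eq_sub_of_hasDerivAt_of_le hab hcont hderiv hint⟩

theorem intervalIntegrable_and_integral_of_comp_neg {f : ℝ → ℝ} {c : ℝ}
    (h : IntervalIntegrable (fun x => f (-x)) volume (-1) 1 ∧ ∫ x in (-1 : ℝ)..1, f (-x) = c) :
    IntervalIntegrable f volume (-1) 1 ∧ ∫ x in (-1 : ℝ)..1, f x = c := by
  refine ⟨by simpa using (IntervalIntegrable.iff_comp_neg (f := f)).2 (by simpa using h.1.symm), ?_⟩
  simpa [integral_comp_neg] using h.2

theorem one_sub_sq_pos_of_mem_Ioo {x : ℝ} (hx : x ∈ Ioo (-1 : ℝ) 1) : 0 < 1 - x ^ 2 := by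
  nlinarith [hx.1, hx.2]

theorem hasDerivAt_sqrt_one_sub_sq {x : ℝ} (hx : x ∈ Ioo (-1 : ℝ) 1) :
    HasDerivAt (fun x => √(1 - x ^ 2)) (-x / √(1 - x ^ 2)) x := by
  have h := ((hasDerivAt_pow 2 x).const_sub 1).sqrt (one_sub_sq_pos_of_mem_Ioo hx).ne'
  convert h using 1
  field_simp
  ring

theorem continuousOn_sqrt_one_sub_sq_div {g : ℝ → ℝ} (hg : ContinuousOn g (Icc (-1) 1))
    (hg0 : ∀ x ∈ Icc (-1 : ℝ) 1, g x ≠ 0) :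
    ContinuousOn (fun x => √(1 - x ^ 2) / g x) (Icc (-1) 1) :=
  (by fun_prop : Continuous fun x : ℝ => √(1 - x ^ 2)).continuousOn.div hg hg0

section Moebius

variable {p : ℝ}

theorem one_sub_moebius_sq {x : ℝ} (hpx : p - x ≠ 0) :
    1 - ((p * x - 1) / (p - x)) ^ 2 = (p ^ 2 - 1) * (1 - x ^ 2) / (p - x) ^ 2 := by
  field_simp
  ring

theorem hasDerivAt_arcsin_moebius (hp : 1 < p) {x : ℝ} (hx : x ∈ Ioo (-1 : ℝ) 1) :
    HasDerivAt (fun x => arcsin ((p * x - 1) / (p - x)))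
      (√(p ^ 2 - 1) / ((p - x) * √(1 - x ^ 2))) x := by
  have hpx : 0 < p - x := by linarith [hx.2]
  have hx2 := one_sub_sq_pos_of_mem_Ioo hx
  have hp2 : 0 < p ^ 2 - 1 := by nlinarith
  have hm : 0 < 1 - ((p * x - 1) / (p - x)) ^ 2 := by
    rw [one_sub_moebius_sq hpx.ne']; positivity
  have hm1 : (p * x - 1) / (p - x) ≠ -1 := by rintro h; simp [h] at hm
  have hm2 : (p * x - 1) / (p - x) ≠ 1 := by rintro h; simp [h] at hm
  have hmoeb : HasDerivAt (fun x => (p * x - 1) / (p - x)) ((p ^ 2 - 1) / (p - x) ^ 2) x := by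
    refine ((((hasDerivAt_id x).const_mul p).sub_const 1).div
      ((hasDerivAt_id x).const_sub p) hpx.ne').congr_deriv ?_
    simp only [id, mul_one]; ring
  refine ((hasDerivAt_arcsin hm1 hm2).comp x hmoeb).congr_deriv ?_
  rw [one_sub_moebius_sq hpx.ne', sqrt_div' _ (sq_nonneg _), sqrt_sq hpx.le,
    sqrt_mul hp2.le]
  have := sq_sqrt hp2.le
  field_simp
  rw [this]

theorem continuousOn_arcsin_moebius (hp : 1 < p) :
    ContinuousOn (fun x => arcsin ((p * x - 1) / (p - x))) (Icc (-1) 1) :=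
  continuous_arcsin.comp_continuousOn <| by
    refine ContinuousOn.div (by fun_prop) (by fun_prop) fun x hx => ?_
    linarith [hx.2]

theorem moebius_one (hp : 1 < p) : (p * 1 - 1) / (p - 1) = 1 := by
  rw [mul_one, div_self (by linarith)]

theorem moebius_neg_one (hp : 1 < p) : (p * -1 - 1) / (p - -1) = -1 := by
  rw [div_eq_iff (by linarith)]; ring

theorem intervalIntegrable_and_integral_sqrt_one_sub_sq_div_one_sub :
    IntervalIntegrable (fun x => √(1 - x ^ 2) / (1 - x)) volume (-1) 1 ∧
      ∫ x in (-1 : ℝ)..1, √(1 - x ^ 2) / (1 - x) = π := by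
  have hderiv : ∀ x ∈ Ioo (-1 : ℝ) 1,
      HasDerivAt (fun x => arcsin x - √(1 - x ^ 2)) (√(1 - x ^ 2) / (1 - x)) x := by
    intro x hx
    have hs := sq_sqrt (one_sub_sq_pos_of_mem_Ioo hx).le
    have hs0 := sqrt_pos.2 (one_sub_sq_pos_of_mem_Ioo hx)
    have h1x : 1 - x ≠ 0 := by linarith [hx.2]
    refine ((hasDerivAt_arcsin (by linarith [hx.1]) (by linarith [hx.2])).sub
      (hasDerivAt_sqrt_one_sub_sq hx)).congr_deriv ?_
    field_simp
    linear_combination -hs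
  have hpos : ∀ x ∈ Ioo (-1 : ℝ) 1, 0 ≤ √(1 - x ^ 2) / (1 - x) := fun x hx =>
    div_nonneg (sqrt_nonneg _) (by linarith [hx.2])
  obtain ⟨hint, hval⟩ := intervalIntegrable_and_integral_eq_sub_of_hasDerivAt_of_nonneg
    (by norm_num) (by fun_prop) hderiv hpos
  refine ⟨hint, hval.trans ?_⟩
  norm_num

theorem intervalIntegrable_and_integral_sqrt_one_sub_sq_div_sub (hp : 1 ≤ p) :
    IntervalIntegrable (fun x => √(1 - x ^ 2) / (p - x)) volume (-1) 1 ∧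
      ∫ x in (-1 : ℝ)..1, √(1 - x ^ 2) / (p - x) = π * (p - √(p ^ 2 - 1)) := by
  rcases hp.eq_or_lt with rfl | hp
  · simpa using intervalIntegrable_and_integral_sqrt_one_sub_sq_div_one_sub
  have hp2 : 0 < p ^ 2 - 1 := by nlinarith
  have hderiv : ∀ x ∈ Ioo (-1 : ℝ) 1, HasDerivAt
      (fun x => p * arcsin x - √(1 - x ^ 2) - √(p ^ 2 - 1) * arcsin ((p * x - 1) / (p - x)))
      (√(1 - x ^ 2) / (p - x)) x := by
    intro x hx
    have hs := sq_sqrt (one_sub_sq_pos_of_mem_Ioo hx).le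
    have hs0 := sqrt_pos.2 (one_sub_sq_pos_of_mem_Ioo hx)
    have hpx : p - x ≠ 0 := by linarith [hx.2]
    refine ((((hasDerivAt_arcsin (by linarith [hx.1]) (by linarith [hx.2])).const_mul p).sub
      (hasDerivAt_sqrt_one_sub_sq hx)).sub
      ((hasDerivAt_arcsin_moebius hp hx).const_mul _)).congr_deriv ?_
    field_simp
    rw [sq_sqrt hp2.le]
    linear_combination -hs
  have hcont : ContinuousOn
      (fun x => p * arcsin x - √(1 - x ^ 2) - √(p ^ 2 - 1) * arcsin ((p * x - 1) / (p - x)))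
      (Icc (-1) 1) :=
    (by fun_prop : Continuous fun x => p * arcsin x - √(1 - x ^ 2)).continuousOn.sub
      (continuousOn_const.mul (continuousOn_arcsin_moebius hp))
  have hpos : ∀ x ∈ Ioo (-1 : ℝ) 1, 0 ≤ √(1 - x ^ 2) / (p - x) := fun x hx =>
    div_nonneg (sqrt_nonneg _) (by linarith [hx.2])
  obtain ⟨hint, hval⟩ := intervalIntegrable_and_integral_eq_sub_of_hasDerivAt_of_nonneg
    (by norm_num) hcont hderiv hpos
  refine ⟨hint, hval.trans ?_⟩
  simp only [moebius_one hp, moebius_neg_one hp, arcsin_one, arcsin_neg_one]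
  norm_num
  ring

theorem integral_sqrt_one_sub_sq_div_sub_sq (hp : 1 < p) :
    ∫ x in (-1 : ℝ)..1, √(1 - x ^ 2) / (p - x) ^ 2 = π * (p / √(p ^ 2 - 1) - 1) := by
  have hp2 : 0 < √(p ^ 2 - 1) := sqrt_pos.2 (by nlinarith)
  have hderiv : ∀ x ∈ Ioo (-1 : ℝ) 1, HasDerivAt
      (fun x => p / √(p ^ 2 - 1) * arcsin ((p * x - 1) / (p - x)) - arcsin x
        + √(1 - x ^ 2) / (p - x))
      (√(1 - x ^ 2) / (p - x) ^ 2) x := by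
    intro x hx
    have hs0 := sqrt_pos.2 (one_sub_sq_pos_of_mem_Ioo hx)
    have hpx : p - x ≠ 0 := by linarith [hx.2]
    refine ((((hasDerivAt_arcsin_moebius hp hx).const_mul _).sub
      (hasDerivAt_arcsin (by linarith [hx.1]) (by linarith [hx.2]))).add
      ((hasDerivAt_sqrt_one_sub_sq hx).div ((hasDerivAt_id x).const_sub p) hpx)).congr_deriv ?_
    simp only [id]
    field_simp
    ring
  have hcont : ContinuousOn
      (fun x => p / √(p ^ 2 - 1) * arcsin ((p * x - 1) / (p - x)) - arcsin x
        + √(1 - x ^ 2) / (p - x)) (Icc (-1) 1) :=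
    ((continuousOn_const.mul (continuousOn_arcsin_moebius hp)).sub
      continuous_arcsin.continuousOn).add
      (continuousOn_sqrt_one_sub_sq_div (by fun_prop) fun x hx => by linarith [hx.2])
  have hpos : ∀ x ∈ Ioo (-1 : ℝ) 1, 0 ≤ √(1 - x ^ 2) / (p - x) ^ 2 := fun x _ =>
    div_nonneg (sqrt_nonneg _) (sq_nonneg _)
  refine (intervalIntegrable_and_integral_eq_sub_of_hasDerivAt_of_nonneg
    (by norm_num) hcont hderiv hpos).2.trans ?_
  simp only [moebius_one hp, moebius_neg_one hp, arcsin_one, arcsin_neg_one]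
  norm_num
  ring

end Moebius

section Kernel

variable {a b : ℝ}

theorem one_add_sq_sub_eq_mul (ha : a ≠ 0) (x : ℝ) :
    1 + a ^ 2 - 2 * a * x = 2 * a * ((1 + a ^ 2) / (2 * a) - x) := by
  field_simp

variable (a) in
theorem one_add_sq_sub_two_mul_pos {x : ℝ} (hx : x ∈ Ioo (-1 : ℝ) 1) :
    0 < 1 + a ^ 2 - 2 * a * x := by
  nlinarith [sq_nonneg (a - x), one_sub_sq_pos_of_mem_Ioo hx]

theorem one_le_one_add_sq_div (ha : 0 < a) : 1 ≤ (1 + a ^ 2) / (2 * a) := by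
  rw [le_div_iff₀ (by positivity)]; nlinarith [sq_nonneg (a - 1)]

theorem sqrt_one_add_sq_div_sq_sub_one (ha : 0 < a) :
    √(((1 + a ^ 2) / (2 * a)) ^ 2 - 1) = |1 - a ^ 2| / (2 * a) := by
  have h : ((1 + a ^ 2) / (2 * a)) ^ 2 - 1 = ((1 - a ^ 2) / (2 * a)) ^ 2 := by
    field_simp; ring
  rw [h, sqrt_sq_eq_abs, abs_div, abs_of_pos (by positivity : 0 < 2 * a)]

theorem div_one_add_sq_sub_eq_inv_mul (ha : a ≠ 0) (y x : ℝ) :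
    y / (1 + a ^ 2 - 2 * a * x) = (2 * a)⁻¹ * (y / ((1 + a ^ 2) / (2 * a) - x)) := by
  rw [one_add_sq_sub_eq_mul ha, div_mul_eq_div_div_swap, div_eq_inv_mul]

variable (a) in
theorem intervalIntegrable_and_integral_sqrt_one_sub_sq_div_one_add_sq_sub :
    IntervalIntegrable (fun x => √(1 - x ^ 2) / (1 + a ^ 2 - 2 * a * x)) volume (-1) 1 ∧
      ∫ x in (-1 : ℝ)..1, √(1 - x ^ 2) / (1 + a ^ 2 - 2 * a * x) = π / (2 * max 1 (a ^ 2)) := by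
  wlog ha : 0 ≤ a generalizing a
  · refine intervalIntegrable_and_integral_of_comp_neg ?_
    have hrefl : (fun x => √(1 - (-x) ^ 2) / (1 + a ^ 2 - 2 * a * -x)) =
        fun x => √(1 - x ^ 2) / (1 + (-a) ^ 2 - 2 * -a * x) := by
      funext x; ring_nf
    simpa only [hrefl, neg_sq a] using this (-a) (by linarith)
  rcases ha.eq_or_lt with rfl | ha
  · simpa using ⟨(by fun_prop : Continuous fun x : ℝ => √(1 - x ^ 2)).intervalIntegrable (-1) 1,
      integral_sqrt_one_sub_sq⟩
  obtain ⟨hint, hval⟩ :=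
    intervalIntegrable_and_integral_sqrt_one_sub_sq_div_sub (one_le_one_add_sq_div ha)
  simp only [div_one_add_sq_sub_eq_inv_mul ha.ne']
  refine ⟨hint.const_mul _, ?_⟩
  rw [intervalIntegral.integral_const_mul, hval, sqrt_one_add_sq_div_sq_sub_one ha]
  rcases le_total a 1 with ha1 | ha1
  · rw [abs_of_nonneg (by nlinarith), max_eq_left (by nlinarith)]
    field_simp
    ring
  · rw [abs_of_nonpos (by nlinarith), max_eq_right (by nlinarith)]
    field_simp
    ring

theorem integral_sqrt_one_sub_sq_div_one_add_sq_sub_sq (ha : a ^ 2 < 1) :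
    ∫ x in (-1 : ℝ)..1, √(1 - x ^ 2) / (1 + a ^ 2 - 2 * a * x) ^ 2 = π / (2 * (1 - a ^ 2)) := by
  wlog ha0 : 0 ≤ a generalizing a
  · have hrefl : (fun x => √(1 - (-x) ^ 2) / (1 + a ^ 2 - 2 * a * -x) ^ 2) =
        fun x => √(1 - x ^ 2) / (1 + (-a) ^ 2 - 2 * -a * x) ^ 2 := by
      funext x; ring_nf
    have h := this (a := -a) (by simpa using ha) (by linarith)
    rw [← hrefl, neg_sq a, integral_comp_neg
      (fun x => √(1 - x ^ 2) / (1 + a ^ 2 - 2 * a * x) ^ 2)] at h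
    simpa using h
  rcases ha0.eq_or_lt with rfl | ha0
  · simpa using integral_sqrt_one_sub_sq
  have hp : 1 < (1 + a ^ 2) / (2 * a) := by
    rw [lt_div_iff₀ (by positivity)]; nlinarith [sq_nonneg (a - 1)]
  have hscale (x : ℝ) : √(1 - x ^ 2) / (1 + a ^ 2 - 2 * a * x) ^ 2 =
      ((2 * a) ^ 2)⁻¹ * (√(1 - x ^ 2) / ((1 + a ^ 2) / (2 * a) - x) ^ 2) := by
    rw [one_add_sq_sub_eq_mul ha0.ne', mul_pow, div_mul_eq_div_div_swap, div_eq_inv_mul]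
  simp only [hscale, intervalIntegral.integral_const_mul, integral_sqrt_one_sub_sq_div_sub_sq hp,
    sqrt_one_add_sq_div_sq_sub_one ha0, abs_of_pos (by linarith : 0 < 1 - a ^ 2)]
  have : 1 - a ^ 2 ≠ 0 := by linarith
  field_simp
  ring

theorem div_mul_eq_inv_mul_sub (hne : a ≠ b) (hab : a * b ≠ 1) {x : ℝ}
    (hu : 1 + a ^ 2 - 2 * a * x ≠ 0) (hv : 1 + b ^ 2 - 2 * b * x ≠ 0) (y : ℝ) :
    y / ((1 + a ^ 2 - 2 * a * x) * (1 + b ^ 2 - 2 * b * x)) =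
      ((a - b) * (1 - a * b))⁻¹ *
        (a * (y / (1 + a ^ 2 - 2 * a * x)) - b * (y / (1 + b ^ 2 - 2 * b * x))) := by
  rw [eq_inv_mul_iff_mul_eq₀ (mul_ne_zero (sub_ne_zero.2 hne) (sub_ne_zero.2 hab.symm)),
    show (a - b) * (1 - a * b) = a * (1 + b ^ 2 - 2 * b * x) - b * (1 + a ^ 2 - 2 * a * x) by ring]
  generalize 1 + a ^ 2 - 2 * a * x = u at hu ⊢
  generalize 1 + b ^ 2 - 2 * b * x = v at hv ⊢
  field_simp

theorem eqOn_sqrt_one_sub_sq_div_mul (hne : a ≠ b) (hab : a * b ≠ 1) :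
    EqOn (fun x => √(1 - x ^ 2) / ((1 + a ^ 2 - 2 * a * x) * (1 + b ^ 2 - 2 * b * x)))
      (fun x => ((a - b) * (1 - a * b))⁻¹ *
        (a * (√(1 - x ^ 2) / (1 + a ^ 2 - 2 * a * x)) -
          b * (√(1 - x ^ 2) / (1 + b ^ 2 - 2 * b * x))))
      (uIoo (-1) 1) := fun x hx => by
  rw [uIoo_of_le (by norm_num)] at hx
  exact div_mul_eq_inv_mul_sub hne hab (one_add_sq_sub_two_mul_pos a hx).ne'
    (one_add_sq_sub_two_mul_pos b hx).ne' _

variable (a b) in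
theorem sqrt_one_sub_sq_div_mul_nonneg {x : ℝ} (hx : x ∈ Icc (-1 : ℝ) 1) :
    0 ≤ √(1 - x ^ 2) / ((1 + a ^ 2 - 2 * a * x) * (1 + b ^ 2 - 2 * b * x)) := by
  have hu : 0 ≤ 1 + a ^ 2 - 2 * a * x := by nlinarith [hx.1, hx.2, sq_nonneg (a - x)]
  have hv : 0 ≤ 1 + b ^ 2 - 2 * b * x := by nlinarith [hx.1, hx.2, sq_nonneg (b - x)]
  positivity

theorem intervalIntegrable_sqrt_one_sub_sq_div_mul (hab : a * b < 1) :
    IntervalIntegrable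
      (fun x => √(1 - x ^ 2) / ((1 + a ^ 2 - 2 * a * x) * (1 + b ^ 2 - 2 * b * x)))
      volume (-1) 1 := by
  rcases eq_or_ne a b with rfl | hne
  · refine ContinuousOn.intervalIntegrable ?_
    rw [uIcc_of_le (by norm_num)]
    refine continuousOn_sqrt_one_sub_sq_div (by fun_prop) fun x hx => ?_
    have : 0 < 1 + a ^ 2 - 2 * a * x := by nlinarith [hx.1, hx.2, sq_nonneg (a - x)]
    positivity
  · refine IntervalIntegrable.congr_uIoo ?_ (eqOn_sqrt_one_sub_sq_div_mul hne hab.ne).symm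
    exact (((intervalIntegrable_and_integral_sqrt_one_sub_sq_div_one_add_sq_sub a).1.const_mul
      a).sub ((intervalIntegrable_and_integral_sqrt_one_sub_sq_div_one_add_sq_sub b).1.const_mul
      b)).const_mul _

end Kernel

section AtomMass

variable {a b : ℝ}

noncomputable def askeyWilsonAtomMass (c q : ℝ) : ℝ :=
  if 1 < |c| then (c ^ 2 - 1) / (c ^ 2 - q) else 0

theorem askeyWilsonAtomMass_nonneg {c q : ℝ} (hq : q ≤ 1) : 0 ≤ askeyWilsonAtomMass c q := by
  unfold askeyWilsonAtomMass
  split_ifs with hc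
  · have : 1 < c ^ 2 := by simpa using one_lt_sq_iff_one_lt_abs c |>.2 hc
    exact div_nonneg (by linarith) (by linarith)
  · exact le_rfl

theorem div_max_sub_div_max_div_sub (hne : a ≠ b) :
    (a / max 1 (a ^ 2) - b / max 1 (b ^ 2)) / (a - b) =
      1 - askeyWilsonAtomMass a (a * b) - askeyWilsonAtomMass b (a * b) := by
  have hab : a - b ≠ 0 := sub_ne_zero.2 hne
  have hmax : ∀ c : ℝ, max 1 (c ^ 2) = if 1 < |c| then c ^ 2 else 1 := fun c => by
    split_ifs with hc
    · exact max_eq_right (one_lt_sq_iff_one_lt_abs c |>.2 hc).le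
    · exact max_eq_left ((sq_le_one_iff_abs_le_one c).2 (not_lt.1 hc))
  have h0 : ∀ c : ℝ, 1 < |c| → c ≠ 0 := fun c hc h => by simp [h] at hc; linarith
  simp only [askeyWilsonAtomMass, hmax]
  split_ifs with ha hb hb
  · have := h0 a ha; have := h0 b hb
    rw [show a ^ 2 - a * b = a * (a - b) by ring, show b ^ 2 - a * b = - (b * (a - b)) by ring]
    field_simp
    ring
  · have := h0 a ha
    rw [show a ^ 2 - a * b = a * (a - b) by ring]
    field_simp
    ring
  · have := h0 b hb
    rw [show b ^ 2 - a * b = - (b * (a - b)) by ring]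
    field_simp
    ring
  · field_simp
    ring

theorem mul_integral_sqrt_one_sub_sq_div_mul (hab : a * b < 1) :
    2 * (1 - a * b) / π *
        ∫ x in (-1 : ℝ)..1, √(1 - x ^ 2) / ((1 + a ^ 2 - 2 * a * x) * (1 + b ^ 2 - 2 * b * x)) =
      1 - askeyWilsonAtomMass a (a * b) - askeyWilsonAtomMass b (a * b) := by
  rcases eq_or_ne a b with rfl | hne
  · have ha : a ^ 2 < 1 := by nlinarith
    have hatom : askeyWilsonAtomMass a (a ^ 2) = 0 :=
      if_neg (not_lt.2 ((sq_le_one_iff_abs_le_one a).1 ha.le))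
    simp only [← sq, integral_sqrt_one_sub_sq_div_one_add_sq_sub_sq ha, hatom, sub_zero]
    have : 1 - a ^ 2 ≠ 0 := by linarith
    field_simp
  obtain ⟨hIa, hJa⟩ := intervalIntegrable_and_integral_sqrt_one_sub_sq_div_one_add_sq_sub a
  obtain ⟨hIb, hJb⟩ := intervalIntegrable_and_integral_sqrt_one_sub_sq_div_one_add_sq_sub b
  rw [integral_congr_uIoo (eqOn_sqrt_one_sub_sq_div_mul hne hab.ne),
    intervalIntegral.integral_const_mul, integral_sub (hIa.const_mul a) (hIb.const_mul b),
    intervalIntegral.integral_const_mul, intervalIntegral.integral_const_mul, hJa, hJb,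
    ← div_max_sub_div_max_div_sub hne]
  have h1 : a - b ≠ 0 := sub_ne_zero.2 hne
  have h2 : 1 - a * b ≠ 0 := by linarith
  field_simp

end AtomMass

theorem withDensity_ofReal_indicator_apply_univ {α : Type*} [MeasurableSpace α] {μ : Measure α}
    {s : Set α} (hs : MeasurableSet s) {f : α → ℝ} (hf : IntegrableOn f s μ)
    (hf0 : ∀ x ∈ s, 0 ≤ f x) :
    μ.withDensity (fun x => ENNReal.ofReal (s.indicator f x)) univ =
      ENNReal.ofReal (∫ x in s, f x ∂μ) := by
  have hind : (fun x => ENNReal.ofReal (s.indicator f x)) = s.indicator (ENNReal.ofReal ∘ f) :=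
    funext fun x => by by_cases hx : x ∈ s <;> simp [hx]
  rw [withDensity_apply _ MeasurableSet.univ, Measure.restrict_univ, hind,
    lintegral_indicator hs, ofReal_integral_eq_lintegral_ofReal hf
      ((ae_restrict_mem hs).mono hf0)]
  rfl

theorem ite_ofReal_smul_dirac_apply_univ (c q y : ℝ) :
    ((if 1 < |c| then ENNReal.ofReal ((c ^ 2 - 1) / (c ^ 2 - q)) else 0) • Measure.dirac y) univ =
      ENNReal.ofReal (askeyWilsonAtomMass c q) := by
  unfold askeyWilsonAtomMass
  split_ifs <;> simp

theorem askeyWilson_apply_univ {a b : ℝ} (hab : a * b < 1) :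
    askeyWilson a b univ =
      ENNReal.ofReal (2 * (1 - a * b) / π *
        ∫ x in (-1 : ℝ)..1, √(1 - x ^ 2) / ((1 + a ^ 2 - 2 * a * x) * (1 + b ^ 2 - 2 * b * x))) +
      ENNReal.ofReal (askeyWilsonAtomMass a (a * b)) +
      ENNReal.ofReal (askeyWilsonAtomMass b (a * b)) := by
  have hdensity : (fun x => 2 * (1 - a * b) / π * √(1 - x ^ 2) /
      ((1 + a ^ 2 - 2 * a * x) * (1 + b ^ 2 - 2 * b * x))) = fun x => 2 * (1 - a * b) / π *
      (√(1 - x ^ 2) / ((1 + a ^ 2 - 2 * a * x) * (1 + b ^ 2 - 2 * b * x))) :=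
    funext fun x => mul_div_assoc _ _ _
  have hint := (intervalIntegrable_iff_integrableOn_Ioo_of_le (by norm_num)).1
    ((intervalIntegrable_sqrt_one_sub_sq_div_mul hab).const_mul (2 * (1 - a * b) / π))
  have hnonneg : ∀ x ∈ Ioo (-1 : ℝ) 1, 0 ≤ 2 * (1 - a * b) / π *
      (√(1 - x ^ 2) / ((1 + a ^ 2 - 2 * a * x) * (1 + b ^ 2 - 2 * b * x))) := fun x hx =>
    mul_nonneg (div_nonneg (by linarith) pi_pos.le)
      (sqrt_one_sub_sq_div_mul_nonneg a b (Ioo_subset_Icc_self hx))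
  rw [askeyWilson, Measure.add_apply, Measure.add_apply, ite_ofReal_smul_dirac_apply_univ,
    ite_ofReal_smul_dirac_apply_univ, hdensity,
    withDensity_ofReal_indicator_apply_univ measurableSet_Ioo hint hnonneg,
    integral_of_le (by norm_num), integral_Ioc_eq_integral_Ioo, MeasureTheory.integral_const_mul]

theorem askeyWilson_isProbabilityMeasure_general (a b : ℝ) (hab : a * b < 1) :
    IsProbabilityMeasure (askeyWilson a b) := by
  have hJ : 0 ≤ 2 * (1 - a * b) / π *
      ∫ x in (-1 : ℝ)..1, √(1 - x ^ 2) / ((1 + a ^ 2 - 2 * a * x) * (1 + b ^ 2 - 2 * b * x)) :=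
    mul_nonneg (div_nonneg (by linarith) pi_pos.le)
      (integral_nonneg (by norm_num) fun x hx => sqrt_one_sub_sq_div_mul_nonneg a b hx)
  have hma := askeyWilsonAtomMass_nonneg (c := a) hab.le
  have hmb := askeyWilsonAtomMass_nonneg (c := b) hab.le
  constructor
  rw [askeyWilson_apply_univ hab, ← ENNReal.ofReal_add hJ hma,
    ← ENNReal.ofReal_add (add_nonneg hJ hma) hmb, mul_integral_sqrt_one_sub_sq_div_mul hab]
  ring_nf
  exact ENNReal.ofReal_one

theorem askeyWilson_isProbabilityMeasure (a b : ℝ) (hab : a * b < 1) (hab0 : a * b ≠ 0) :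
    IsProbabilityMeasure (askeyWilson a b) :=
  askeyWilson_isProbabilityMeasure_general a b hab
end

section
/- With notation as before, define β_n = Σ_{k=1}^{n+1} R_k Σ_{i_1+...+i_k = n-k+1} α_{i_1} δ_{i_2}···δ_{i_k} for n ≥ 0. Then B(z)=Σ β_n z^n satisfies B(z) = A(z)·r(zD(z)) = zD(z)r²(zD(z)) + r(zD(z)) as formal power series. -/
open PowerSeries Finset

/-- Formal composition `f ∘ g` of power series, valid when `g` has zero constant term
(in which case `coeff n (g ^ k) = 0` for `k > n`, so the sum below is the full sum). -/
noncomputable def pcomp (f g : PowerSeries ℂ) : PowerSeries ℂ :=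
  PowerSeries.mk fun n =>
    ∑ k ∈ Finset.range (n + 1), PowerSeries.coeff k f * PowerSeries.coeff n (g ^ k)

/-!
Since `X * φ` has zero constant term, `(X * φ) ^ k` starts in degree `k`, so the composition
can be truncated: `[zⁿ] ψ · r(zφ) = Σ_{k ≤ n} r_k [z^{n-k}] ψ φ^k`. Expanding `ψ φ^k` as a sum
over compositions of `n - k` into `k + 1` parts identifies `βₙ` with the coefficients of
`A · r(zD)`, and `αₙ` (for `n ≥ 1`) with those of `zD · r(zD)`, i.e. `A = 1 + zD · r(zD)`.
The second identity then follows by ring arithmetic.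
-/

theorem Finset.Nat.sum_antidiagonalTuple_succ {M : Type*} [AddCommMonoid M] (k n : ℕ)
    (f : (Fin (k + 1) → ℕ) → M) :
    ∑ x ∈ Nat.antidiagonalTuple (k + 1) n, f x =
      ∑ p ∈ antidiagonal n, ∑ y ∈ Nat.antidiagonalTuple k p.2, f (Fin.cons p.1 y) := by
  simp only [Finset.sum, Nat.antidiagonalTuple, Multiset.Nat.antidiagonalTuple,
    List.Nat.antidiagonalTuple, Multiset.map_coe, Multiset.sum_coe, List.flatMap_def,
    List.map_flatten, List.sum_flatten, List.map_map, Function.comp_def]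
  rw [show (antidiagonal n).val = List.Nat.antidiagonal n from rfl, Multiset.map_coe,
    Multiset.sum_coe]

theorem Finset.sum_Icc_one_eq_sum_range {M : Type*} [AddCommMonoid M] (f : ℕ → M) (n : ℕ) :
    ∑ k ∈ Icc 1 n, f k = ∑ j ∈ range n, f (j + 1) := by
  rw [range_eq_Ico, sum_Ico_add', zero_add, Ico_add_one_right_eq_Icc]

namespace PowerSeries

section CommSemiring

variable {R : Type*} [CommSemiring R]

theorem coeff_pow_eq_sum_antidiagonalTuple (φ : R⟦X⟧) (k n : ℕ) :
    coeff n (φ ^ k) = ∑ x ∈ Finset.Nat.antidiagonalTuple k n, ∏ i, coeff (x i) φ := by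
  induction k generalizing n with
  | zero => cases n <;> simp [coeff_one]
  | succ k ih =>
    simp only [pow_succ', coeff_mul, ih, Finset.Nat.sum_antidiagonalTuple_succ,
      Fin.prod_univ_succ, Fin.cons_zero, Fin.cons_succ, Finset.mul_sum]

theorem coeff_mul_pow_eq_sum_antidiagonalTuple (ψ φ : R⟦X⟧) (k n : ℕ) :
    coeff n (ψ * φ ^ k) = ∑ x ∈ Finset.Nat.antidiagonalTuple (k + 1) n,
      coeff (x 0) ψ * ∏ i : Fin k, coeff (x i.succ) φ := by
  simp only [coeff_mul, coeff_pow_eq_sum_antidiagonalTuple,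
    Finset.Nat.sum_antidiagonalTuple_succ, Fin.cons_zero, Fin.cons_succ, Finset.mul_sum]

theorem coeff_X_mul_pow_of_lt (φ : R⟦X⟧) {n k : ℕ} (h : n < k) :
    coeff n ((X * φ) ^ k) = 0 := by
  rw [mul_pow, coeff_X_pow_mul', if_neg h.not_ge]

theorem coeff_mul_X_mul_pow_of_le (ψ φ : R⟦X⟧) {n k : ℕ} (h : k ≤ n) :
    coeff n (ψ * (X * φ) ^ k) = coeff (n - k) (ψ * φ ^ k) := by
  rw [mul_pow, mul_left_comm, coeff_X_pow_mul', if_pos h]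

end CommSemiring

theorem coeff_pcomp_X_mul (r φ : ℂ⟦X⟧) {n N : ℕ} (h : n ≤ N) :
    coeff n (pcomp r (X * φ)) = ∑ k ∈ range (N + 1), coeff k r * coeff n ((X * φ) ^ k) := by
  rw [pcomp, coeff_mk]
  refine sum_subset (range_subset_range.2 (by omega)) fun k _ hk => ?_
  rw [coeff_X_mul_pow_of_lt φ (by simpa using hk), mul_zero]

theorem coeff_mul_pcomp_X_mul (ψ r φ : ℂ⟦X⟧) (n : ℕ) :
    coeff n (ψ * pcomp r (X * φ)) =
      ∑ k ∈ range (n + 1), coeff k r * coeff (n - k) (ψ * φ ^ k) := by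
  calc coeff n (ψ * pcomp r (X * φ))
      = ∑ p ∈ antidiagonal n, ∑ k ∈ range (n + 1),
          coeff k r * (coeff p.1 ψ * coeff p.2 ((X * φ) ^ k)) := by
        rw [coeff_mul]
        refine sum_congr rfl fun p hp => ?_
        rw [coeff_pcomp_X_mul r φ (HasAntidiagonal.antidiagonal.snd_le hp), mul_sum]
        exact sum_congr rfl fun k _ => mul_left_comm _ _ _
    _ = ∑ k ∈ range (n + 1), coeff k r * coeff n (ψ * (X * φ) ^ k) := by
        rw [sum_comm]
        simp only [← mul_sum, coeff_mul]
    _ = _ := sum_congr rfl fun k hk => by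
        rw [coeff_mul_X_mul_pow_of_le ψ φ (Nat.lt_succ_iff.1 (mem_range.1 hk))]

end PowerSeries

/-- With `αₙ` as before and
`βₙ = Σ_{k=1}^{n+1} R_k Σ_{i₁+⋯+i_k = n-k+1} α_{i₁} δ_{i₂}⋯δ_{i_k}`, the generating
function `B(z) = Σ βₙ zⁿ` satisfies `B = A·r(zD) = zD·r²(zD) + r(zD)`. -/
theorem genfun_B_eq (δ R : ℕ → ℂ) (α β : ℕ → ℂ) (hα0 : α 0 = 1)
    (hα : ∀ n : ℕ, 1 ≤ n → α n =
      ∑ k ∈ Finset.Icc 1 n, R k *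
        ∑ x ∈ Finset.Nat.antidiagonalTuple k (n - k), ∏ i, δ (x i))
    (hβ : ∀ n : ℕ, β n =
      ∑ j ∈ Finset.range (n + 1), R (j + 1) *
        ∑ x ∈ Finset.Nat.antidiagonalTuple (j + 1) (n - j),
          α (x 0) * ∏ i : Fin j, δ (x i.succ)) :
    PowerSeries.mk β =
      PowerSeries.mk α *
        pcomp (PowerSeries.mk fun k => R (k + 1)) (PowerSeries.X * PowerSeries.mk δ) ∧
    PowerSeries.mk β =
      (PowerSeries.X * PowerSeries.mk δ) *
        (pcomp (PowerSeries.mk fun k => R (k + 1)) (PowerSeries.X * PowerSeries.mk δ)) ^ 2 +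
      pcomp (PowerSeries.mk fun k => R (k + 1)) (PowerSeries.X * PowerSeries.mk δ) := by
  set ρ := pcomp (PowerSeries.mk fun k => R (k + 1)) (X * PowerSeries.mk δ)
  have hB : PowerSeries.mk β = PowerSeries.mk α * ρ := by
    ext n
    simp only [ρ, coeff_mk, hβ, coeff_mul_pcomp_X_mul, coeff_mul_pow_eq_sum_antidiagonalTuple]
  have hA : PowerSeries.mk α = 1 + X * PowerSeries.mk δ * ρ := by
    ext n
    rcases n with _ | m
    · simp [hα0]
    · rw [coeff_mk, hα _ m.succ_pos, map_add, coeff_one, if_neg m.succ_ne_zero, zero_add,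
        mul_assoc, coeff_succ_X_mul, coeff_mul_pcomp_X_mul, sum_Icc_one_eq_sum_range]
      simp only [coeff_mk, ← pow_succ', coeff_pow_eq_sum_antidiagonalTuple, Nat.succ_eq_add_one,
        Nat.add_sub_add_right]
  exact ⟨hB, by rw [hB, hA]; ring⟩
end
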